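/- Under the hypotheses of the adjuvant mass-balance identity with β = 0, the total mass W(t) = V_A P_A(t) + ∫_0^L M(t,x) dx + V_B P_B(t) is constant in time; in particular, if the initial data satisfy P_A(0) = P_A^0, M(0,x) = 0 for all x ∈ [0,L], and P_B(0) = 0, then W(t) = V_A P_A^0 for all t ≥ 0. -/

import Mathlib

/-!
Differentiating under the integral sign and using the heat equation, the rate of change of
`∫₀ᴸ M(t,x) dx` is `D_P (∂ₓM(t,L) - ∂ₓM(t,0))`, which by the two flux boundary conditions is
exactly the rate at which mass leaves compartment A minus the rate at which it enters
compartment B. With `β = 0` the three rates cancel, so the total mass has derivative zero.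
-/

open Set MeasureTheory

theorem hasDerivAt_intervalIntegral_of_continuousOn_deriv {E : Type*} [NormedAddCommGroup E]
    [NormedSpace ℝ E] {F : ℝ → ℝ → E} {a b : ℝ}
    (hab : a ≤ b) (hF : ∀ t, ContinuousOn (F t) (Icc a b))
    (hFt : ∀ x ∈ Icc a b, ∀ t, DifferentiableAt ℝ (fun s => F s x) t)
    (hF'_cont : ContinuousOn (fun p : ℝ × ℝ => deriv (fun s => F s p.2) p.1)
      (univ ×ˢ Icc a b))
    (t₀ : ℝ) :
    HasDerivAt (fun t => ∫ x in a..b, F t x)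
      (∫ x in a..b, deriv (fun s => F s x) t₀) t₀ := by
  have hIoc : uIoc a b ⊆ Icc a b := by
    rw [uIoc_of_le hab]
    exact Ioc_subset_Icc_self
  obtain ⟨C, hC⟩ : ∃ C, ∀ p ∈ Icc (t₀ - 1) (t₀ + 1) ×ˢ Icc a b,
      ‖deriv (fun s => F s p.2) p.1‖ ≤ C :=
    (isCompact_Icc.prod isCompact_Icc).exists_bound_of_continuousOn
      (hF'_cont.mono (prod_mono (subset_univ _) le_rfl))
  have hF'_t₀ : ContinuousOn (fun x => deriv (fun s => F s x) t₀) (Icc a b) :=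
    hF'_cont.comp (Continuous.prodMk_right t₀).continuousOn fun x hx => ⟨mem_univ _, hx⟩
  refine (intervalIntegral.hasDerivAt_integral_of_dominated_loc_of_deriv_le
    (bound := fun _ => C) (Metric.ball_mem_nhds t₀ one_pos)
    (Filter.Eventually.of_forall fun t =>
      ((hF t).mono hIoc).aestronglyMeasurable measurableSet_uIoc)
    ((hF t₀).intervalIntegrable_of_Icc hab)
    ((hF'_t₀.mono hIoc).aestronglyMeasurable measurableSet_uIoc)
    (ae_of_all _ fun x hx t ht => hC (t, x) ⟨?_, hIoc hx⟩)
    intervalIntegrable_const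
    (ae_of_all _ fun x hx t _ => (hFt x (hIoc hx) t).hasDerivAt)).2
  rw [Metric.mem_ball, Real.dist_eq, abs_lt] at ht
  constructor <;> linarith [ht.1, ht.2]

theorem integral_deriv_eq_flux_of_heat_equation {M : ℝ → ℝ → ℝ} {D a b t : ℝ} (hab : a < b)
    (hMx : ContDiffOn ℝ 2 (M t) (Icc a b))
    (hpde : ∀ x ∈ Icc a b, deriv (fun s => M s x) t =
      D * derivWithin (derivWithin (M t) (Icc a b)) (Icc a b) x) :
    ∫ x in a..b, deriv (fun s => M s x) t =
      D * (derivWithin (M t) (Icc a b) b - derivWithin (M t) (Icc a b) a) := by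
  have hMx' : ContDiffOn ℝ 1 (derivWithin (M t) (Icc a b)) (Icc a b) :=
    hMx.derivWithin (uniqueDiffOn_Icc hab) (by norm_num)
  rw [intervalIntegral.integral_congr fun x hx => hpde x (uIcc_of_le hab.le ▸ hx),
    intervalIntegral.integral_const_mul,
    intervalIntegral.integral_derivWithin_Icc_of_contDiffOn_Icc hMx' hab.le]

theorem adjuvant_mass_conservation_general
    (V_A V_B A L D_P lamA lamB κA1 κB1 β PA0 : ℝ)
    (hL : 0 < L)
    (hβ : β = 0)
    (P_A P_B : ℝ → ℝ) (M : ℝ → ℝ → ℝ)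
    (hPA : Differentiable ℝ P_A) (hPB : Differentiable ℝ P_B)
    (hMx : ∀ t : ℝ, ContDiffOn ℝ 2 (M t) (Set.Icc 0 L))
    (hMt : ∀ x ∈ Set.Icc (0 : ℝ) L, ∀ t : ℝ,
      DifferentiableAt ℝ (fun s => M s x) t)
    (hMt_cont : ContinuousOn
      (fun p : ℝ × ℝ => deriv (fun s => M s p.2) p.1)
      (Set.univ ×ˢ Set.Icc 0 L))
    (hodeA : ∀ t : ℝ, V_A * deriv P_A t =
      -(lamA * A * (P_A t - κA1 * M t 0 / A)))
    (hpde : ∀ t : ℝ, ∀ x ∈ Set.Icc (0 : ℝ) L,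
      deriv (fun s => M s x) t =
        D_P * derivWithin (derivWithin (M t) (Set.Icc 0 L)) (Set.Icc 0 L) x)
    (hodeB : ∀ t : ℝ, V_B * deriv P_B t =
      lamB * A * (κB1 * M t L / A - P_B t) - β * V_B * P_B t)
    (hbc0 : ∀ t : ℝ, -(D_P * derivWithin (M t) (Set.Icc 0 L) 0) =
      lamA * A * (P_A t - κA1 * M t 0 / A))
    (hbcL : ∀ t : ℝ, -(D_P * derivWithin (M t) (Set.Icc 0 L) L) =
      lamB * A * (κB1 * M t L / A - P_B t)) :
    (∀ t₁ t₂ : ℝ,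
      V_A * P_A t₁ + (∫ x in (0 : ℝ)..L, M t₁ x) + V_B * P_B t₁ =
      V_A * P_A t₂ + (∫ x in (0 : ℝ)..L, M t₂ x) + V_B * P_B t₂) ∧
    ((P_A 0 = PA0 ∧ (∀ x ∈ Set.Icc (0 : ℝ) L, M 0 x = 0) ∧ P_B 0 = 0) →
      ∀ t : ℝ, 0 ≤ t →
        V_A * P_A t + (∫ x in (0 : ℝ)..L, M t x) + V_B * P_B t =
          V_A * PA0) := by
  simp only [hβ, zero_mul, sub_zero] at hodeB
  have hW : ∀ t, HasDerivAt
      (fun t => V_A * P_A t + (∫ x in (0 : ℝ)..L, M t x) + V_B * P_B t) 0 t := by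
    intro t
    have hmass := hasDerivAt_intervalIntegral_of_continuousOn_deriv hL.le
      (fun t => (hMx t).continuousOn) hMt hMt_cont t
    rw [integral_deriv_eq_flux_of_heat_equation hL (hMx t) (hpde t), mul_sub] at hmass
    refine ((((hPA t).hasDerivAt.const_mul V_A).add hmass).add
      ((hPB t).hasDerivAt.const_mul V_B)).congr_deriv ?_
    linarith [hodeA t, hodeB t, hbc0 t, hbcL t]
  have hconst := is_const_of_deriv_eq_zero (fun t => (hW t).differentiableAt)
    (fun t => (hW t).deriv)
  refine ⟨hconst, fun ⟨hA0, hM0, hB0⟩ t _ => ?_⟩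
  have hM0_int : ∫ x in (0 : ℝ)..L, M 0 x = 0 := by
    rw [intervalIntegral.integral_congr (g := fun _ => (0 : ℝ))
      fun x hx => hM0 x (uIcc_of_le hL.le ▸ hx)]
    simp
  rw [hconst t 0, hA0, hB0, hM0_int]
  ring

/-- Conservation of adjuvant mass when `β = 0`: under the hypotheses of the
adjuvant mass-balance identity, the total mass
`W(t) = V_A P_A(t) + ∫₀ᴸ M(t,x) dx + V_B P_B(t)` is constant in time; in
particular, if `P_A(0) = P_A⁰`, `M(0,·) ≡ 0` on `[0,L]` and `P_B(0) = 0`,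
then `W(t) = V_A P_A⁰` for all `t ≥ 0`. -/
theorem adjuvant_mass_conservation
    (V_A V_B A L D_P lamA lamB κA1 κB1 β PA0 : ℝ)
    (hVA : 0 < V_A) (hVB : 0 < V_B) (hA : 0 < A) (hL : 0 < L)
    (hDP : 0 < D_P) (hlamA : 0 < lamA) (hlamB : 0 < lamB)
    (hκA : 0 < κA1) (hκB : 0 < κB1) (hβ : β = 0) (hPA0 : 0 < PA0)
    (P_A P_B : ℝ → ℝ) (M : ℝ → ℝ → ℝ)
    (hPA : Differentiable ℝ P_A) (hPB : Differentiable ℝ P_B)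
    (hMx : ∀ t : ℝ, ContDiffOn ℝ 2 (M t) (Set.Icc 0 L))
    (hMt : ∀ x ∈ Set.Icc (0 : ℝ) L, ∀ t : ℝ,
      DifferentiableAt ℝ (fun s => M s x) t)
    (hMt_cont : ContinuousOn
      (fun p : ℝ × ℝ => deriv (fun s => M s p.2) p.1)
      (Set.univ ×ˢ Set.Icc 0 L))
    (hodeA : ∀ t : ℝ, V_A * deriv P_A t =
      -(lamA * A * (P_A t - κA1 * M t 0 / A)))
    (hpde : ∀ t : ℝ, ∀ x ∈ Set.Icc (0 : ℝ) L,
      deriv (fun s => M s x) t =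
        D_P * derivWithin (derivWithin (M t) (Set.Icc 0 L)) (Set.Icc 0 L) x)
    (hodeB : ∀ t : ℝ, V_B * deriv P_B t =
      lamB * A * (κB1 * M t L / A - P_B t) - β * V_B * P_B t)
    (hbc0 : ∀ t : ℝ, -(D_P * derivWithin (M t) (Set.Icc 0 L) 0) =
      lamA * A * (P_A t - κA1 * M t 0 / A))
    (hbcL : ∀ t : ℝ, -(D_P * derivWithin (M t) (Set.Icc 0 L) L) =
      lamB * A * (κB1 * M t L / A - P_B t)) :
    (∀ t₁ t₂ : ℝ,
      V_A * P_A t₁ + (∫ x in (0 : ℝ)..L, M t₁ x) + V_B * P_B t₁ =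
      V_A * P_A t₂ + (∫ x in (0 : ℝ)..L, M t₂ x) + V_B * P_B t₂) ∧
    ((P_A 0 = PA0 ∧ (∀ x ∈ Set.Icc (0 : ℝ) L, M 0 x = 0) ∧ P_B 0 = 0) →
      ∀ t : ℝ, 0 ≤ t →
        V_A * P_A t + (∫ x in (0 : ℝ)..L, M t x) + V_B * P_B t =
          V_A * PA0) :=
  adjuvant_mass_conservation_general V_A V_B A L D_P lamA lamB κA1 κB1 β PA0 hL hβ P_A P_B M hPA hPB
    hMx hMt hMt_cont hodeA hpde hodeB hbc0 hbcL
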